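/- arXiv:1110.4297 — 2 statements merged into one kernel-verified Lean document; each statement's English description precedes it below -/
import Mathlib

section
/- The map L₂ defined on 𝔽₁^⊥ = {F ∈ 𝔽 : ω(F) = 0} by L₂(F) = F − 2{F₁(F) + F₂(F)} is an involutive linear isometry of 𝔽₁^⊥ commuting with the action on 𝔽 of every linear isometry A of V with A∘φ = φ∘A and Aξ = ξ, and it yields the orthogonal decomposition 𝔽₁^⊥ = v𝔽 ⊕ h𝔽, where v𝔽 = {F ∈ 𝔽 : hF = 0 and ω(F) = 0} is the (−1)-eigenspace and h𝔽 = {F ∈ 𝔽 : F₁(F) = F₂(F) = 0} is the (+1)-eigenspace of L₂. -/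
open scoped BigOperators RealInnerProductSpace

noncomputable section

variable {V : Type*} [NormedAddCommGroup V] [InnerProductSpace ℝ V]

/-- A map `V → V → V → ℝ` linear in each of its three arguments. -/
def Trilinear (F : V → V → V → ℝ) : Prop :=
  (∀ y z, IsLinearMap ℝ fun x => F x y z) ∧
  (∀ x z, IsLinearMap ℝ fun y => F x y z) ∧
  (∀ x y, IsLinearMap ℝ fun z => F x y z)

/-- Almost contact metric structure `(φ, ξ, η, g)` on `V` with `dim V = 2n+1`. -/
def ACM (n : ℕ) (φ : V →ₗ[ℝ] V) (ξ : V) (η : V →ₗ[ℝ] ℝ) : Prop :=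
  Module.finrank ℝ V = 2 * n + 1 ∧
  (∀ x, φ (φ x) = -x + η x • ξ) ∧
  φ ξ = 0 ∧
  (∀ x, η (φ x) = 0) ∧
  ⟪ξ, ξ⟫ = 1 ∧
  (∀ x y, ⟪φ x, φ y⟫ = ⟪x, y⟫ - η x * η y)

/-- Membership in the space `𝔽` of trilinear forms with the symmetries (1). -/
def InF (φ : V →ₗ[ℝ] V) (ξ : V) (η : V →ₗ[ℝ] ℝ) (F : V → V → V → ℝ) : Prop :=
  Trilinear F ∧
  (∀ x y z, F x y z = -F x z y) ∧
  (∀ x y z, F x y z = -F x (φ y) (φ z) + η y * F x ξ z + η z * F x y ξ)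

/-- `h x = -φ²x`. -/
def hMap (φ : V →ₗ[ℝ] V) (x : V) : V := -φ (φ x)

/-- `hF(x,y,z) = F(hx,hy,hz)`. -/
def hF (φ : V →ₗ[ℝ] V) (F : V → V → V → ℝ) : V → V → V → ℝ :=
  fun x y z => F (hMap φ x) (hMap φ y) (hMap φ z)

def F1 (ξ : V) (η : V →ₗ[ℝ] ℝ) (F : V → V → V → ℝ) : V → V → V → ℝ :=
  fun x y z => η x * F ξ y z

def F2 (ξ : V) (η : V →ₗ[ℝ] ℝ) (F : V → V → V → ℝ) : V → V → V → ℝ :=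
  fun x y z => η y * F x ξ z - η z * F x ξ y

def F3 (ξ : V) (η : V →ₗ[ℝ] ℝ) (F : V → V → V → ℝ) : V → V → V → ℝ :=
  fun x y z => η x * η y * F ξ ξ z - η x * η z * F ξ ξ y

def F4 (φ : V →ₗ[ℝ] V) (ξ : V) (η : V →ₗ[ℝ] ℝ) (F : V → V → V → ℝ) : V → V → V → ℝ :=
  fun x y z => η y * F (φ x) ξ (φ z) - η z * F (φ x) ξ (φ y)

def F5 (ξ : V) (η : V →ₗ[ℝ] ℝ) (F : V → V → V → ℝ) : V → V → V → ℝ :=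
  fun x y z => η y * F z ξ x - η z * F y ξ x

def F6 (φ : V →ₗ[ℝ] V) (ξ : V) (η : V →ₗ[ℝ] ℝ) (F : V → V → V → ℝ) : V → V → V → ℝ :=
  fun x y z => η y * F (φ z) ξ (φ x) - η z * F (φ y) ξ (φ x)

/-- `f(F)(z) = Σᵢ F(eᵢ, eᵢ, z)`. -/
def fTr {ι : Type*} [Fintype ι] (e : OrthonormalBasis ι ℝ V) (F : V → V → V → ℝ) (z : V) : ℝ :=
  ∑ i, F (e i) (e i) z

/-- `f*(F)(z) = Σᵢ F(eᵢ, φ eᵢ, z)`. -/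
def fTrStar {ι : Type*} [Fintype ι] (φ : V →ₗ[ℝ] V) (e : OrthonormalBasis ι ℝ V)
    (F : V → V → V → ℝ) (z : V) : ℝ :=
  ∑ i, F (e i) (φ (e i)) z

/-- The inner product on `𝔽`: `⟨F,G⟩ = Σ_{i,j,k} F(eᵢ,eⱼ,e_k) G(eᵢ,eⱼ,e_k)`. -/
def innerF {ι : Type*} [Fintype ι] (e : OrthonormalBasis ι ℝ V) (F G : V → V → V → ℝ) : ℝ :=
  ∑ i, ∑ j, ∑ k, F (e i) (e j) (e k) * G (e i) (e j) (e k)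

def F7 (n : ℕ) {ι : Type*} [Fintype ι] (e : OrthonormalBasis ι ℝ V) (ξ : V) (η : V →ₗ[ℝ] ℝ)
    (F : V → V → V → ℝ) : V → V → V → ℝ :=
  fun x y z => (1 / (2 * (n : ℝ))) * fTr e F ξ * (η z * ⟪x, y⟫ - η y * ⟪x, z⟫)

def F8 (n : ℕ) (φ : V →ₗ[ℝ] V) {ι : Type*} [Fintype ι] (e : OrthonormalBasis ι ℝ V) (ξ : V)
    (η : V →ₗ[ℝ] ℝ) (F : V → V → V → ℝ) : V → V → V → ℝ :=
  fun x y z => -(1 / (2 * (n : ℝ))) * fTrStar φ e F ξ * (η z * ⟪x, φ y⟫ - η y * ⟪x, φ z⟫)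

def F9 (n : ℕ) (φ : V →ₗ[ℝ] V) {ι : Type*} [Fintype ι] (e : OrthonormalBasis ι ℝ V)
    (F : V → V → V → ℝ) : V → V → V → ℝ :=
  fun x y z => (1 / (2 * ((n : ℝ) - 1))) *
    (⟪hMap φ x, hMap φ y⟫ * fTr e F z - ⟪hMap φ x, hMap φ z⟫ * fTr e F y
      - ⟪x, φ y⟫ * fTr e F (φ z) + ⟪x, φ z⟫ * fTr e F (φ y))

def F10 (φ : V →ₗ[ℝ] V) (F : V → V → V → ℝ) : V → V → V → ℝ :=
  fun x y z => (1 / 2) * (F x y z + F (φ x) (φ y) z)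

def F11 (φ : V →ₗ[ℝ] V) (F : V → V → V → ℝ) : V → V → V → ℝ :=
  fun x y z => (1 / 6) * (F x y z + F y z x + F z x y
    - F (φ x) (φ y) z - F (φ y) (φ z) x - F (φ z) (φ x) y)

def F12 (φ : V →ₗ[ℝ] V) (F : V → V → V → ℝ) : V → V → V → ℝ :=
  fun x y z => (1 / 2) * (F x y z - F (φ x) (φ y) z)

/-- The action of a linear isometry `A` of `V` on trilinear forms:
`(A·F)(x,y,z) = F(A⁻¹x, A⁻¹y, A⁻¹z)`. -/
def actA (A : V ≃ₗᵢ[ℝ] V) (F : V → V → V → ℝ) : V → V → V → ℝ :=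
  fun x y z => F (A.symm x) (A.symm y) (A.symm z)

def L1 (ξ : V) (η : V →ₗ[ℝ] ℝ) (F : V → V → V → ℝ) : V → V → V → ℝ :=
  fun x y z => F x y z - 2 * F3 ξ η F x y z

def L2 (ξ : V) (η : V →ₗ[ℝ] ℝ) (F : V → V → V → ℝ) : V → V → V → ℝ :=
  fun x y z => F x y z - 2 * (F1 ξ η F x y z + F2 ξ η F x y z)

def L3 (ξ : V) (η : V →ₗ[ℝ] ℝ) (F : V → V → V → ℝ) : V → V → V → ℝ :=
  fun x y z => F2 ξ η F x y z - F1 ξ η F x y z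

def L4 (φ : V →ₗ[ℝ] V) (ξ : V) (η : V →ₗ[ℝ] ℝ) (F : V → V → V → ℝ) : V → V → V → ℝ :=
  fun x y z => -F4 φ ξ η F x y z

def L5 (ξ : V) (η : V →ₗ[ℝ] ℝ) (F : V → V → V → ℝ) : V → V → V → ℝ :=
  fun x y z => -F5 ξ η F x y z

def L6 (n : ℕ) {ι : Type*} [Fintype ι] (e : OrthonormalBasis ι ℝ V) (ξ : V) (η : V →ₗ[ℝ] ℝ)
    (F : V → V → V → ℝ) : V → V → V → ℝ :=
  fun x y z => F x y z - 2 * F7 n e ξ η F x y z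

def L7 (n : ℕ) (φ : V →ₗ[ℝ] V) {ι : Type*} [Fintype ι] (e : OrthonormalBasis ι ℝ V) (ξ : V)
    (η : V →ₗ[ℝ] ℝ) (F : V → V → V → ℝ) : V → V → V → ℝ :=
  fun x y z => F x y z - 2 * F8 n φ e ξ η F x y z

/-- The subspace `𝔽₁ = {F ∈ 𝔽 : F = F₃(F)}`. -/
def MemF1sub (φ : V →ₗ[ℝ] V) (ξ : V) (η : V →ₗ[ℝ] ℝ) (F : V → V → V → ℝ) : Prop :=
  InF φ ξ η F ∧ F = F3 ξ η F

/-- The subspace `v𝔽 = {F ∈ 𝔽 : hF = 0, ω(F) = 0}`. -/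
def MemVF (φ : V →ₗ[ℝ] V) (ξ : V) (η : V →ₗ[ℝ] ℝ) (F : V → V → V → ℝ) : Prop :=
  InF φ ξ η F ∧ hF φ F = 0 ∧ ∀ z, F ξ ξ z = 0

/-- The subspace `h𝔽 = {F ∈ 𝔽 : F₁(F) = F₂(F) = 0}`. -/
def MemHF (φ : V →ₗ[ℝ] V) (ξ : V) (η : V →ₗ[ℝ] ℝ) (F : V → V → V → ℝ) : Prop :=
  InF φ ξ η F ∧ F1 ξ η F = 0 ∧ F2 ξ η F = 0

/-- The subspace `(v𝔽)′ = {F ∈ 𝔽 : hF = 0, F(ξ,·,·) = 0}`. -/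
def MemVF' (φ : V →ₗ[ℝ] V) (ξ : V) (η : V →ₗ[ℝ] ℝ) (F : V → V → V → ℝ) : Prop :=
  InF φ ξ η F ∧ hF φ F = 0 ∧ ∀ y z, F ξ y z = 0

/-- The subspace `𝔽₈ = {F ∈ 𝔽 : hF = 0, F(·,·,ξ) = 0}`. -/
def MemF8sub (φ : V →ₗ[ℝ] V) (ξ : V) (η : V →ₗ[ℝ] ℝ) (F : V → V → V → ℝ) : Prop :=
  InF φ ξ η F ∧ hF φ F = 0 ∧ ∀ x y, F x y ξ = 0

/-- The subspace `𝒩 = {F ∈ (v𝔽)′ : F = F₄(F)}`. -/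
def MemN (φ : V →ₗ[ℝ] V) (ξ : V) (η : V →ₗ[ℝ] ℝ) (F : V → V → V → ℝ) : Prop :=
  MemVF' φ ξ η F ∧ F = F4 φ ξ η F

/-- The subspace `𝒩̃ = {F ∈ (v𝔽)′ : F = -F₄(F)}`. -/
def MemNt (φ : V →ₗ[ℝ] V) (ξ : V) (η : V →ₗ[ℝ] ℝ) (F : V → V → V → ℝ) : Prop :=
  MemVF' φ ξ η F ∧ F = -F4 φ ξ η F

/-- The subspace `𝒬𝒮𝔽 = {F ∈ (v𝔽)′ : F = F₄(F) = F₅(F)}`. -/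
def MemQS (φ : V →ₗ[ℝ] V) (ξ : V) (η : V →ₗ[ℝ] ℝ) (F : V → V → V → ℝ) : Prop :=
  MemVF' φ ξ η F ∧ F = F4 φ ξ η F ∧ F = F5 ξ η F

/-- The subspace `𝒬𝒦𝔽 = {F ∈ (v𝔽)′ : F = F₄(F) = -F₅(F)}`. -/
def MemQK (φ : V →ₗ[ℝ] V) (ξ : V) (η : V →ₗ[ℝ] ℝ) (F : V → V → V → ℝ) : Prop :=
  MemVF' φ ξ η F ∧ F = F4 φ ξ η F ∧ F = -F5 ξ η F

/-- The subspace `𝔽₆ = {F ∈ (v𝔽)′ : F = -F₄(F) = F₅(F)}`. -/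
def MemF6sub (φ : V →ₗ[ℝ] V) (ξ : V) (η : V →ₗ[ℝ] ℝ) (F : V → V → V → ℝ) : Prop :=
  MemVF' φ ξ η F ∧ F = -F4 φ ξ η F ∧ F = F5 ξ η F

/-- The subspace `𝔽₇ = {F ∈ (v𝔽)′ : F = -F₄(F) = -F₅(F)}`. -/
def MemF7sub (φ : V →ₗ[ℝ] V) (ξ : V) (η : V →ₗ[ℝ] ℝ) (F : V → V → V → ℝ) : Prop :=
  MemVF' φ ξ η F ∧ F = -F4 φ ξ η F ∧ F = -F5 ξ η F

/-- The subspace `𝔽₂ = {F ∈ 𝔽 : F = F₇(F)}`. -/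
def MemF2sub (n : ℕ) {ι : Type*} [Fintype ι] (e : OrthonormalBasis ι ℝ V) (φ : V →ₗ[ℝ] V)
    (ξ : V) (η : V →ₗ[ℝ] ℝ) (F : V → V → V → ℝ) : Prop :=
  InF φ ξ η F ∧ F = F7 n e ξ η F

/-- The subspace `𝔽₃ = {F ∈ 𝔽 : F = F₈(F)}`. -/
def MemF3sub (n : ℕ) {ι : Type*} [Fintype ι] (e : OrthonormalBasis ι ℝ V) (φ : V →ₗ[ℝ] V)
    (ξ : V) (η : V →ₗ[ℝ] ℝ) (F : V → V → V → ℝ) : Prop :=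
  InF φ ξ η F ∧ F = F8 n φ e ξ η F

/-- The subspace `𝔽₄ = {F ∈ 𝔽 : F = F₄(F) = F₅(F), f(F)(ξ) = 0}`. -/
def MemF4sub (n : ℕ) {ι : Type*} [Fintype ι] (e : OrthonormalBasis ι ℝ V) (φ : V →ₗ[ℝ] V)
    (ξ : V) (η : V →ₗ[ℝ] ℝ) (F : V → V → V → ℝ) : Prop :=
  InF φ ξ η F ∧ F = F4 φ ξ η F ∧ F = F5 ξ η F ∧ fTr e F ξ = 0

/-- The subspace `𝔽₅ = {F ∈ 𝔽 : F = F₄(F) = -F₅(F), f*(F)(ξ) = 0}`. -/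
def MemF5sub (n : ℕ) {ι : Type*} [Fintype ι] (e : OrthonormalBasis ι ℝ V) (φ : V →ₗ[ℝ] V)
    (ξ : V) (η : V →ₗ[ℝ] ℝ) (F : V → V → V → ℝ) : Prop :=
  InF φ ξ η F ∧ F = F4 φ ξ η F ∧ F = -F5 ξ η F ∧ fTrStar φ e F ξ = 0

/-- The subspace `𝔽₄ = {F ∈ (v𝔽)′ : F = F₄(F) = F₅(F), f(F)(ξ) = 0}`. -/
def MemF4sub' (n : ℕ) {ι : Type*} [Fintype ι] (e : OrthonormalBasis ι ℝ V) (φ : V →ₗ[ℝ] V)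
    (ξ : V) (η : V →ₗ[ℝ] ℝ) (F : V → V → V → ℝ) : Prop :=
  MemVF' φ ξ η F ∧ F = F4 φ ξ η F ∧ F = F5 ξ η F ∧ fTr e F ξ = 0

/-- The subspace `𝔽₅ = {F ∈ (v𝔽)′ : F = F₄(F) = -F₅(F), f*(F)(ξ) = 0}`. -/
def MemF5sub' (n : ℕ) {ι : Type*} [Fintype ι] (e : OrthonormalBasis ι ℝ V) (φ : V →ₗ[ℝ] V)
    (ξ : V) (η : V →ₗ[ℝ] ℝ) (F : V → V → V → ℝ) : Prop :=
  MemVF' φ ξ η F ∧ F = F4 φ ξ η F ∧ F = -F5 ξ η F ∧ fTrStar φ e F ξ = 0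

/-- The subspace `𝔽₉ = {F ∈ 𝔽 : F = hF = F₉(F)}`. -/
def MemF9sub (n : ℕ) {ι : Type*} [Fintype ι] (e : OrthonormalBasis ι ℝ V) (φ : V →ₗ[ℝ] V)
    (ξ : V) (η : V →ₗ[ℝ] ℝ) (F : V → V → V → ℝ) : Prop :=
  InF φ ξ η F ∧ F = hF φ F ∧ F = F9 n φ e F

/-- The subspace `𝔽₁₀ = {F ∈ 𝔽 : F = hF = F₁₀(F) - F₉(F)}`. -/
def MemF10sub (n : ℕ) {ι : Type*} [Fintype ι] (e : OrthonormalBasis ι ℝ V) (φ : V →ₗ[ℝ] V)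
    (ξ : V) (η : V →ₗ[ℝ] ℝ) (F : V → V → V → ℝ) : Prop :=
  InF φ ξ η F ∧ F = hF φ F ∧ F = F10 φ F - F9 n φ e F

/-- The subspace `𝔽₁₁ = {F ∈ 𝔽 : F = hF = F₁₁(F)}`. -/
def MemF11sub (φ : V →ₗ[ℝ] V) (ξ : V) (η : V →ₗ[ℝ] ℝ) (F : V → V → V → ℝ) : Prop :=
  InF φ ξ η F ∧ F = hF φ F ∧ F = F11 φ F

/-- The subspace `𝔽₁₂ = {F ∈ 𝔽 : F = hF = F₁₂(F) - F₁₁(F)}`. -/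
def MemF12sub (φ : V →ₗ[ℝ] V) (ξ : V) (η : V →ₗ[ℝ] ℝ) (F : V → V → V → ℝ) : Prop :=
  InF φ ξ η F ∧ F = hF φ F ∧ F = F12 φ F - F11 φ F

-- helper block, to be inserted before `theorem stmt9`
section Helpers

variable {n : ℕ} {φ : V →ₗ[ℝ] V} {ξ : V} {η : V →ₗ[ℝ] ℝ}

lemma acm_eta_xi (h : ACM n φ ξ η) : η ξ = 1 := by
  obtain ⟨-, h2, h3, -, h5, -⟩ := h
  have hx : η ξ • ξ = ξ := by
    have := h2 ξ
    rw [h3, map_zero] at this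
    have := this.symm
    rw [neg_add_eq_zero] at this
    exact this.symm
  have h6 : ⟪η ξ • ξ, ξ⟫ = ⟪ξ, ξ⟫ := by rw [hx]
  rw [real_inner_smul_left, h5] at h6
  linarith

lemma acm_eta_inner (h : ACM n φ ξ η) (x : V) : η x = ⟪x, ξ⟫ := by
  have h6 := h.2.2.2.2.2 x ξ
  rw [h.2.2.1, inner_zero_right, acm_eta_xi h, mul_one] at h6
  linarith

lemma acm_hMap (h : ACM n φ ξ η) (x : V) : hMap φ x = x - η x • ξ := by
  rw [hMap, h.2.1 x]; abel

lemma acm_eta_hMap (h : ACM n φ ξ η) (x : V) : η (hMap φ x) = 0 := by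
  rw [acm_hMap h, map_sub, map_smul, acm_eta_xi h]
  simp

lemma lin_const_mul {L : V → ℝ} (hL : IsLinearMap ℝ L) (c : ℝ) :
    IsLinearMap ℝ fun v => c * L v :=
  ⟨fun a b => by rw [hL.map_add]; ring,
   fun r a => by rw [hL.map_smul]; simp only [smul_eq_mul]; ring⟩

lemma sum_eta {ι : Type*} [Fintype ι] (h : ACM n φ ξ η) (e : OrthonormalBasis ι ℝ V)
    {L : V → ℝ} (hL : IsLinearMap ℝ L) : ∑ i, η (e i) * L (e i) = L ξ := by
  let Lb := IsLinearMap.mk' L hL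
  have hLb : ∀ v, L v = Lb v := fun v => rfl
  calc ∑ i, η (e i) * L (e i) = ∑ i, Lb (⟪e i, ξ⟫ • e i) := by
        refine Finset.sum_congr rfl fun i _ => ?_
        rw [map_smul, smul_eq_mul, acm_eta_inner h, real_inner_comm, hLb]
    _ = Lb (∑ i, ⟪e i, ξ⟫ • e i) := (map_sum Lb _ _).symm
    _ = Lb ξ := by rw [e.sum_repr' ξ]
    _ = L ξ := rfl

section FFacts

variable {F : V → V → V → ℝ}

lemma T1add (hT : Trilinear F) (a b y z : V) : F (a + b) y z = F a y z + F b y z :=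
  (hT.1 y z).map_add a b

lemma T1smul (hT : Trilinear F) (c : ℝ) (a y z : V) : F (c • a) y z = c * F a y z := by
  simpa using (hT.1 y z).map_smul c a

lemma T1sub (hT : Trilinear F) (a b y z : V) : F (a - b) y z = F a y z - F b y z :=
  (hT.1 y z).map_sub a b

lemma T2sub (hT : Trilinear F) (x a b z : V) : F x (a - b) z = F x a z - F x b z :=
  (hT.2.1 x z).map_sub a b

lemma T2smul (hT : Trilinear F) (x : V) (c : ℝ) (a z : V) : F x (c • a) z = c * F x a z := by
  simpa using (hT.2.1 x z).map_smul c a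

lemma T3sub (hT : Trilinear F) (x y a b : V) : F x y (a - b) = F x y a - F x y b :=
  (hT.2.2 x y).map_sub a b

lemma T3smul (hT : Trilinear F) (x y : V) (c : ℝ) (a : V) : F x y (c • a) = c * F x y a := by
  simpa using (hT.2.2 x y).map_smul c a

lemma fxi2 (hA : ∀ x y z, F x y z = -F x z y) (x : V) : F x ξ ξ = 0 := by
  have := hA x ξ ξ; linarith

lemma fxiyxi (hA : ∀ x y z, F x y z = -F x z y) (hω : ∀ z, F ξ ξ z = 0) (y : V) :
    F ξ y ξ = 0 := by
  rw [hA ξ y ξ, hω]; ring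

lemma f_phiphi (hInF : InF φ ξ η F) (hω : ∀ z, F ξ ξ z = 0) (y z : V) :
    F ξ (φ y) (φ z) = -F ξ y z := by
  have h2 := hInF.2.2 ξ y z
  rw [hω z, fxiyxi hInF.2.1 hω y] at h2
  linarith

lemma hF_apply (h : ACM n φ ξ η) (hInF : InF φ ξ η F) (hω : ∀ z, F ξ ξ z = 0) (x y z : V) :
    hF φ F x y z = F x y z - (η x * F ξ y z + (η y * F x ξ z - η z * F x ξ y)) := by
  have hT := hInF.1
  have hA := hInF.2.1
  have s1 : ∀ (a : V) (c : ℝ) (b d : V), F (a - c • ξ) b d = F a b d - c * F ξ b d := by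
    intro a c b d; rw [T1sub hT, T1smul hT]
  have s2 : ∀ (b : V) (a : V) (c : ℝ) (d : V), F b (a - c • ξ) d = F b a d - c * F b ξ d := by
    intro b a c d; rw [T2sub hT, T2smul hT]
  have s3 : ∀ (b d a : V) (c : ℝ), F b d (a - c • ξ) = F b d a - c * F b d ξ := by
    intro b d a c; rw [T3sub hT, T3smul hT]
  rw [hF, acm_hMap h, acm_hMap h, acm_hMap h]
  simp only [s1, s2, s3, hω, fxi2 hA, fxiyxi hA hω, mul_zero, sub_zero]
  rw [hA x y ξ]
  ring


lemma L2_apply (x y z : V) :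
    L2 ξ η F x y z = F x y z - 2 * (η x * F ξ y z + (η y * F x ξ z - η z * F x ξ y)) := rfl

lemma L2_eq_hF (h : ACM n φ ξ η) (hInF : InF φ ξ η F) (hω : ∀ z, F ξ ξ z = 0) (x y z : V) :
    L2 ξ η F x y z = 2 * hF φ F x y z - F x y z := by
  rw [L2_apply, hF_apply h hInF hω]; ring

lemma L2_xi1 (h : ACM n φ ξ η) (hInF : InF φ ξ η F) (hω : ∀ z, F ξ ξ z = 0) (y z : V) :
    L2 ξ η F ξ y z = -F ξ y z := by
  rw [L2_apply, acm_eta_xi h]; simp only [hω]; ring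

lemma L2_xi2 (h : ACM n φ ξ η) (hInF : InF φ ξ η F) (hω : ∀ z, F ξ ξ z = 0) (x z : V) :
    L2 ξ η F x ξ z = -F x ξ z := by
  rw [L2_apply, acm_eta_xi h]; simp only [hω, fxi2 hInF.2.1]; ring

lemma L2_xi3 (h : ACM n φ ξ η) (hInF : InF φ ξ η F) (hω : ∀ z, F ξ ξ z = 0) (x y : V) :
    L2 ξ η F x y ξ = F x ξ y := by
  rw [L2_apply, acm_eta_xi h]
  simp only [hω, fxiyxi hInF.2.1 hω, fxi2 hInF.2.1]
  rw [hInF.2.1 x y ξ]; ring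

lemma L2_mem (h : ACM n φ ξ η) (hInF : InF φ ξ η F) (hω : ∀ z, F ξ ξ z = 0) :
    InF φ ξ η (L2 ξ η F) ∧ ∀ z, L2 ξ η F ξ ξ z = 0 := by
  have hT := hInF.1
  have hA := hInF.2.1
  have hωL : ∀ z, L2 ξ η F ξ ξ z = 0 := fun z => by
    rw [L2_xi1 h hInF hω, hω]; ring
  refine ⟨⟨⟨?_, ?_, ?_⟩, ?_, ?_⟩, ?_⟩
  · intro y z
    refine ⟨fun a b => ?_, fun c a => ?_⟩
    · show L2 ξ η F (a + b) y z = L2 ξ η F a y z + L2 ξ η F b y z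
      have e1 : F (a + b) y z = F a y z + F b y z := T1add hT a b y z
      have e2 : F (a + b) ξ z = F a ξ z + F b ξ z := T1add hT a b ξ z
      have e3 : F (a + b) ξ y = F a ξ y + F b ξ y := T1add hT a b ξ y
      simp only [L2_apply, e1, e2, e3, map_add]; ring
    · show L2 ξ η F (c • a) y z = c • L2 ξ η F a y z
      have e1 : F (c • a) y z = c * F a y z := T1smul hT c a y z
      have e2 : F (c • a) ξ z = c * F a ξ z := T1smul hT c a ξ z
      have e3 : F (c • a) ξ y = c * F a ξ y := T1smul hT c a ξ y
      simp only [L2_apply, e1, e2, e3, map_smul, smul_eq_mul]; ring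
  · intro x z
    refine ⟨fun a b => ?_, fun c a => ?_⟩
    · show L2 ξ η F x (a + b) z = L2 ξ η F x a z + L2 ξ η F x b z
      have e1 : F x (a + b) z = F x a z + F x b z := (hT.2.1 x z).map_add a b
      have e2 : F ξ (a + b) z = F ξ a z + F ξ b z := (hT.2.1 ξ z).map_add a b
      have e3 : F x ξ (a + b) = F x ξ a + F x ξ b := (hT.2.2 x ξ).map_add a b
      simp only [L2_apply, e1, e2, e3, map_add]; ring
    · show L2 ξ η F x (c • a) z = c • L2 ξ η F x a z
      have e1 : F x (c • a) z = c * F x a z := T2smul hT x c a z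
      have e2 : F ξ (c • a) z = c * F ξ a z := T2smul hT ξ c a z
      have e3 : F x ξ (c • a) = c * F x ξ a := T3smul hT x ξ c a
      simp only [L2_apply, e1, e2, e3, map_smul, smul_eq_mul]; ring
  · intro x y
    refine ⟨fun a b => ?_, fun c a => ?_⟩
    · show L2 ξ η F x y (a + b) = L2 ξ η F x y a + L2 ξ η F x y b
      have e1 : F x y (a + b) = F x y a + F x y b := (hT.2.2 x y).map_add a b
      have e2 : F ξ y (a + b) = F ξ y a + F ξ y b := (hT.2.2 ξ y).map_add a b
      have e3 : F x ξ (a + b) = F x ξ a + F x ξ b := (hT.2.2 x ξ).map_add a b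
      simp only [L2_apply, e1, e2, e3, map_add]; ring
    · show L2 ξ η F x y (c • a) = c • L2 ξ η F x y a
      have e1 : F x y (c • a) = c * F x y a := T3smul hT x y c a
      have e2 : F ξ y (c • a) = c * F ξ y a := T3smul hT ξ y c a
      have e3 : F x ξ (c • a) = c * F x ξ a := T3smul hT x ξ c a
      simp only [L2_apply, e1, e2, e3, map_smul, smul_eq_mul]; ring
  · intro x y z
    simp only [L2_apply]
    rw [hA x y z, hA x ξ z, hA ξ y z]
    ring
  · intro x y z
    have g1 : F x (φ y) (φ z) = -F x y z + η y * F x ξ z + η z * F x y ξ := by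
      linarith [hInF.2.2 x y z]
    have g2 : F ξ (φ y) (φ z) = -F ξ y z := f_phiphi hInF hω y z
    simp only [L2_apply, g1, g2, h.2.2.2.1, acm_eta_xi h, hω, fxi2 hA, fxiyxi hA hω]
    rw [hA x y ξ]
    ring
  · exact hωL

lemma Fv_mem (h : ACM n φ ξ η) (hInF : InF φ ξ η F) (hω : ∀ z, F ξ ξ z = 0) :
    InF φ ξ η (fun x y z => η x * F ξ y z + (η y * F x ξ z - η z * F x ξ y)) := by
  have hT := hInF.1
  have hA := hInF.2.1
  refine ⟨⟨?_, ?_, ?_⟩, ?_, ?_⟩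
  · intro y z
    refine ⟨fun a b => ?_, fun c a => ?_⟩
    · show η (a + b) * F ξ y z + (η y * F (a + b) ξ z - η z * F (a + b) ξ y) = _
      rw [T1add hT a b ξ z, T1add hT a b ξ y, map_add]; ring
    · show η (c • a) * F ξ y z + (η y * F (c • a) ξ z - η z * F (c • a) ξ y) = _
      rw [T1smul hT c a ξ z, T1smul hT c a ξ y, map_smul]
      simp only [smul_eq_mul]; ring
  · intro x z
    refine ⟨fun a b => ?_, fun c a => ?_⟩
    · show η x * F ξ (a + b) z + (η (a + b) * F x ξ z - η z * F x ξ (a + b)) = _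
      rw [(hT.2.1 ξ z).map_add a b, (hT.2.2 x ξ).map_add a b, map_add]; ring
    · show η x * F ξ (c • a) z + (η (c • a) * F x ξ z - η z * F x ξ (c • a)) = _
      rw [T2smul hT ξ c a z, T3smul hT x ξ c a, map_smul]
      simp only [smul_eq_mul]; ring
  · intro x y
    refine ⟨fun a b => ?_, fun c a => ?_⟩
    · show η x * F ξ y (a + b) + (η y * F x ξ (a + b) - η (a + b) * F x ξ y) = _
      rw [(hT.2.2 ξ y).map_add a b, (hT.2.2 x ξ).map_add a b, map_add]; ring
    · show η x * F ξ y (c • a) + (η y * F x ξ (c • a) - η (c • a) * F x ξ y) = _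
      rw [T3smul hT ξ y c a, T3smul hT x ξ c a, map_smul]
      simp only [smul_eq_mul]; ring
  · intro x y z
    show η x * F ξ y z + (η y * F x ξ z - η z * F x ξ y)
      = -(η x * F ξ z y + (η z * F x ξ y - η y * F x ξ z))
    rw [hA ξ z y]; ring
  · intro x y z
    show η x * F ξ y z + (η y * F x ξ z - η z * F x ξ y)
      = -(η x * F ξ (φ y) (φ z) + (η (φ y) * F x ξ (φ z) - η (φ z) * F x ξ (φ y)))
        + η y * (η x * F ξ ξ z + (η ξ * F x ξ z - η z * F x ξ ξ))
        + η z * (η x * F ξ y ξ + (η y * F x ξ ξ - η ξ * F x ξ y))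
    simp only [h.2.2.2.1, acm_eta_xi h, hω, fxi2 hA, fxiyxi hA hω, f_phiphi hInF hω]
    ring

lemma InF_sub {G : V → V → V → ℝ} (hF' : InF φ ξ η F) (hG : InF φ ξ η G) :
    InF φ ξ η (fun x y z => F x y z - G x y z) := by
  refine ⟨⟨?_, ?_, ?_⟩, ?_, ?_⟩
  · intro y z
    exact ⟨fun a b => by show F (a+b) y z - G (a+b) y z = _
                         rw [(hF'.1.1 y z).map_add, (hG.1.1 y z).map_add]; ring,
           fun c a => by show F (c • a) y z - G (c • a) y z = _
                         rw [T1smul hF'.1, T1smul hG.1, smul_eq_mul]; ring⟩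
  · intro x z
    exact ⟨fun a b => by show F x (a+b) z - G x (a+b) z = _
                         rw [(hF'.1.2.1 x z).map_add, (hG.1.2.1 x z).map_add]; ring,
           fun c a => by show F x (c • a) z - G x (c • a) z = _
                         rw [T2smul hF'.1, T2smul hG.1, smul_eq_mul]; ring⟩
  · intro x y
    exact ⟨fun a b => by show F x y (a+b) - G x y (a+b) = _
                         rw [(hF'.1.2.2 x y).map_add, (hG.1.2.2 x y).map_add]; ring,
           fun c a => by show F x y (c • a) - G x y (c • a) = _
                         rw [T3smul hF'.1, T3smul hG.1, smul_eq_mul]; ring⟩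
  · intro x y z
    show F x y z - G x y z = -(F x z y - G x z y)
    linarith [hF'.2.1 x y z, hG.2.1 x y z]
  · intro x y z
    show F x y z - G x y z = -(F x (φ y) (φ z) - G x (φ y) (φ z)) +
      η y * (F x ξ z - G x ξ z) + η z * (F x y ξ - G x y ξ)
    have h1 := hF'.2.2 x y z
    have h2 := hG.2.2 x y z
    ring_nf
    ring_nf at h1 h2
    linarith

lemma lin_mul_const {L : V → ℝ} (hL : IsLinearMap ℝ L) (c : ℝ) :
    IsLinearMap ℝ fun v => L v * c :=
  ⟨fun a b => by rw [hL.map_add]; ring,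
   fun r a => by rw [hL.map_smul]; simp only [smul_eq_mul]; ring⟩

section Sums

variable {ι : Type*} [Fintype ι] {F H : V → V → V → ℝ}

lemma expandL (e : OrthonormalBasis ι ℝ V) :
    innerF e (L2 ξ η F) H =
      innerF e F H - 2 * innerF e (F1 ξ η F) H - 2 * innerF e (F2 ξ η F) H := by
  simp only [innerF, L2, F1, F2, Finset.mul_sum, ← Finset.sum_sub_distrib]
  refine Finset.sum_congr rfl fun i _ => ?_
  refine Finset.sum_congr rfl fun j _ => ?_
  refine Finset.sum_congr rfl fun k _ => ?_
  ring

lemma expandR (e : OrthonormalBasis ι ℝ V) :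
    innerF e F (L2 ξ η H) =
      innerF e F H - 2 * innerF e F (F1 ξ η H) - 2 * innerF e F (F2 ξ η H) := by
  simp only [innerF, L2, F1, F2, Finset.mul_sum, ← Finset.sum_sub_distrib]
  refine Finset.sum_congr rfl fun i _ => ?_
  refine Finset.sum_congr rfl fun j _ => ?_
  refine Finset.sum_congr rfl fun k _ => ?_
  ring

lemma crossA (h : ACM n φ ξ η) (e : OrthonormalBasis ι ℝ V) (hTH : Trilinear H) :
    innerF e (F1 ξ η F) H = ∑ j, ∑ k, F ξ (e j) (e k) * H ξ (e j) (e k) := by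
  simp only [innerF, F1]
  rw [Finset.sum_comm]
  refine Finset.sum_congr rfl fun j _ => ?_
  rw [Finset.sum_comm]
  refine Finset.sum_congr rfl fun k _ => ?_
  have step : ∀ i, η (e i) * F ξ (e j) (e k) * H (e i) (e j) (e k)
      = η (e i) * (F ξ (e j) (e k) * H (e i) (e j) (e k)) := fun i => by ring
  simp only [step]
  exact sum_eta h e (lin_const_mul (hTH.1 (e j) (e k)) _)

lemma crossB (h : ACM n φ ξ η) (e : OrthonormalBasis ι ℝ V) (hTF : Trilinear F) :
    innerF e F (F1 ξ η H) = ∑ j, ∑ k, F ξ (e j) (e k) * H ξ (e j) (e k) := by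
  simp only [innerF, F1]
  rw [Finset.sum_comm]
  refine Finset.sum_congr rfl fun j _ => ?_
  rw [Finset.sum_comm]
  refine Finset.sum_congr rfl fun k _ => ?_
  have step : ∀ i, F (e i) (e j) (e k) * (η (e i) * H ξ (e j) (e k))
      = η (e i) * (F (e i) (e j) (e k) * H ξ (e j) (e k)) := fun i => by ring
  simp only [step]
  exact sum_eta h e (lin_mul_const (hTF.1 (e j) (e k)) _)

lemma crossC (h : ACM n φ ξ η) (e : OrthonormalBasis ι ℝ V) (hTH : Trilinear H)
    (hAH : ∀ x y z, H x y z = -H x z y) :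
    innerF e (F2 ξ η F) H = 2 * ∑ i, ∑ k, F (e i) ξ (e k) * H (e i) ξ (e k) := by
  simp only [innerF, F2, sub_mul, Finset.sum_sub_distrib]
  have t1 : ∀ i : ι, ∑ j, ∑ k, η (e j) * F (e i) ξ (e k) * H (e i) (e j) (e k)
      = ∑ k, F (e i) ξ (e k) * H (e i) ξ (e k) := by
    intro i
    rw [Finset.sum_comm]
    refine Finset.sum_congr rfl fun k _ => ?_
    have step : ∀ j, η (e j) * F (e i) ξ (e k) * H (e i) (e j) (e k)
        = η (e j) * (F (e i) ξ (e k) * H (e i) (e j) (e k)) := fun j => by ring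
    simp only [step]
    exact sum_eta h e (lin_const_mul (hTH.2.1 (e i) (e k)) _)
  have t2 : ∀ i : ι, ∑ j, ∑ k, η (e k) * F (e i) ξ (e j) * H (e i) (e j) (e k)
      = -∑ k, F (e i) ξ (e k) * H (e i) ξ (e k) := by
    intro i
    have inner : ∀ j, ∑ k, η (e k) * F (e i) ξ (e j) * H (e i) (e j) (e k)
        = -(F (e i) ξ (e j) * H (e i) ξ (e j)) := by
      intro j
      have step : ∀ k, η (e k) * F (e i) ξ (e j) * H (e i) (e j) (e k)
          = η (e k) * (F (e i) ξ (e j) * H (e i) (e j) (e k)) := fun k => by ring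
      simp only [step]
      rw [sum_eta h e (lin_const_mul (hTH.2.2 (e i) (e j)) _)]
      rw [hAH (e i) (e j) ξ]
      ring
    simp only [inner, Finset.sum_neg_distrib]
  simp only [t1, t2, Finset.sum_neg_distrib, sub_neg_eq_add]
  ring

lemma crossD (h : ACM n φ ξ η) (e : OrthonormalBasis ι ℝ V) (hTF : Trilinear F)
    (hAF : ∀ x y z, F x y z = -F x z y) :
    innerF e F (F2 ξ η H) = 2 * ∑ i, ∑ k, F (e i) ξ (e k) * H (e i) ξ (e k) := by
  simp only [innerF, F2, mul_sub, Finset.sum_sub_distrib]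
  have t1 : ∀ i : ι, ∑ j, ∑ k, F (e i) (e j) (e k) * (η (e j) * H (e i) ξ (e k))
      = ∑ k, F (e i) ξ (e k) * H (e i) ξ (e k) := by
    intro i
    rw [Finset.sum_comm]
    refine Finset.sum_congr rfl fun k _ => ?_
    have step : ∀ j, F (e i) (e j) (e k) * (η (e j) * H (e i) ξ (e k))
        = η (e j) * (F (e i) (e j) (e k) * H (e i) ξ (e k)) := fun j => by ring
    simp only [step]
    exact sum_eta h e (lin_mul_const (hTF.2.1 (e i) (e k)) _)
  have t2 : ∀ i : ι, ∑ j, ∑ k, F (e i) (e j) (e k) * (η (e k) * H (e i) ξ (e j))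
      = -∑ k, F (e i) ξ (e k) * H (e i) ξ (e k) := by
    intro i
    have inner : ∀ j, ∑ k, F (e i) (e j) (e k) * (η (e k) * H (e i) ξ (e j))
        = -(F (e i) ξ (e j) * H (e i) ξ (e j)) := by
      intro j
      have step : ∀ k, F (e i) (e j) (e k) * (η (e k) * H (e i) ξ (e j))
          = η (e k) * (F (e i) (e j) (e k) * H (e i) ξ (e j)) := fun k => by ring
      simp only [step]
      rw [sum_eta h e (lin_mul_const (hTF.2.2 (e i) (e j)) _)]
      rw [hAF (e i) (e j) ξ]
      ring
    simp only [inner, Finset.sum_neg_distrib]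
  simp only [t1, t2, Finset.sum_neg_distrib, sub_neg_eq_add]
  ring

lemma selfadj (h : ACM n φ ξ η) (e : OrthonormalBasis ι ℝ V)
    (hTF : Trilinear F) (hAF : ∀ x y z, F x y z = -F x z y)
    (hTH : Trilinear H) (hAH : ∀ x y z, H x y z = -H x z y) :
    innerF e (L2 ξ η F) H = innerF e F (L2 ξ η H) := by
  rw [expandL e, expandR e, crossA h e hTH, crossB h e hTF,
    crossC h e hTH hAH, crossD h e hTF hAF]

end Sums

end FFacts

end Helpers

theorem stmt9 (n : ℕ) (φ : V →ₗ[ℝ] V) (ξ : V) (η : V →ₗ[ℝ] ℝ)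
    (hacm : ACM n φ ξ η) (e : OrthonormalBasis (Fin (2 * n + 1)) ℝ V) :
    (∀ F, InF φ ξ η F → (∀ z, F ξ ξ z = 0) →
      InF φ ξ η (L2 ξ η F) ∧ ∀ z, L2 ξ η F ξ ξ z = 0) ∧
    (∀ (a : ℝ) (F G : V → V → V → ℝ),
      L2 ξ η (fun x y z => a * F x y z + G x y z) =
        fun x y z => a * L2 ξ η F x y z + L2 ξ η G x y z) ∧
    (∀ F, InF φ ξ η F → (∀ z, F ξ ξ z = 0) → L2 ξ η (L2 ξ η F) = F) ∧
    (∀ F G, InF φ ξ η F → (∀ z, F ξ ξ z = 0) → InF φ ξ η G → (∀ z, G ξ ξ z = 0) →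
      innerF e (L2 ξ η F) (L2 ξ η G) = innerF e F G) ∧
    (∀ A : V ≃ₗᵢ[ℝ] V, (∀ x, A (φ x) = φ (A x)) → A ξ = ξ →
      ∀ F, InF φ ξ η F → (∀ z, F ξ ξ z = 0) →
        L2 ξ η (actA A F) = actA A (L2 ξ η F)) ∧
    (∀ F, InF φ ξ η F → (∀ z, F ξ ξ z = 0) →
      (L2 ξ η F = -F ↔ hF φ F = 0 ∧ ∀ z, F ξ ξ z = 0) ∧
      (L2 ξ η F = F ↔ F1 ξ η F = 0 ∧ F2 ξ η F = 0)) ∧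
    (∀ F, InF φ ξ η F → (∀ z, F ξ ξ z = 0) →
      ∃! p : (V → V → V → ℝ) × (V → V → V → ℝ),
        MemVF φ ξ η p.1 ∧ MemHF φ ξ η p.2 ∧ F = p.1 + p.2) ∧
    (∀ F G, MemVF φ ξ η F → MemHF φ ξ η G → innerF e F G = 0) := by
  have hηξ : η ξ = 1 := acm_eta_xi hacm
  -- Part 1
  have part1 : ∀ F, InF φ ξ η F → (∀ z, F ξ ξ z = 0) →
      InF φ ξ η (L2 ξ η F) ∧ ∀ z, L2 ξ η F ξ ξ z = 0 :=
    fun F hInF hω => L2_mem hacm hInF hω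
  -- Part 2
  have part2 : ∀ (a : ℝ) (F G : V → V → V → ℝ),
      L2 ξ η (fun x y z => a * F x y z + G x y z) =
        fun x y z => a * L2 ξ η F x y z + L2 ξ η G x y z := by
    intro a F G
    funext x y z
    simp only [L2, F1, F2]
    ring
  -- Part 3
  have part3 : ∀ F, InF φ ξ η F → (∀ z, F ξ ξ z = 0) → L2 ξ η (L2 ξ η F) = F := by
    intro F hInF hω
    funext x y z
    rw [L2_apply (F := L2 ξ η F), L2_xi1 hacm hInF hω, L2_xi2 hacm hInF hω,
      L2_xi2 hacm hInF hω, L2_apply]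
    ring
  -- Part 4
  have part4 : ∀ F G, InF φ ξ η F → (∀ z, F ξ ξ z = 0) → InF φ ξ η G → (∀ z, G ξ ξ z = 0) →
      innerF e (L2 ξ η F) (L2 ξ η G) = innerF e F G := by
    intro F G hF hωF hG hωG
    have hmemG := L2_mem hacm hG hωG
    calc innerF e (L2 ξ η F) (L2 ξ η G)
        = innerF e F (L2 ξ η (L2 ξ η G)) :=
          selfadj hacm e hF.1 hF.2.1 hmemG.1.1 hmemG.1.2.1
      _ = innerF e F G := by rw [part3 G hG hωG]
  -- Part 5
  have part5 : ∀ A : V ≃ₗᵢ[ℝ] V, (∀ x, A (φ x) = φ (A x)) → A ξ = ξ →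
      ∀ F, InF φ ξ η F → (∀ z, F ξ ξ z = 0) →
        L2 ξ η (actA A F) = actA A (L2 ξ η F) := by
    intro A hAφ hAξ F hInF hω
    have hAsξ : A.symm ξ = ξ := by
      have h1 := congrArg A.symm hAξ
      rw [A.symm_apply_apply] at h1
      exact h1.symm
    have hηA : ∀ x, η (A.symm x) = η x := by
      intro x
      rw [acm_eta_inner hacm, acm_eta_inner hacm]
      calc ⟪A.symm x, ξ⟫ = ⟪A.symm x, A.symm ξ⟫ := by rw [hAsξ]
        _ = ⟪x, ξ⟫ := A.symm.inner_map_map x ξ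
    funext x y z
    simp only [L2, F1, F2, actA, hηA, hAsξ]
  -- Part 6
  have part6 : ∀ F, InF φ ξ η F → (∀ z, F ξ ξ z = 0) →
      (L2 ξ η F = -F ↔ hF φ F = 0 ∧ ∀ z, F ξ ξ z = 0) ∧
      (L2 ξ η F = F ↔ F1 ξ η F = 0 ∧ F2 ξ η F = 0) := by
    intro F hInF hω
    constructor
    · constructor
      · intro hL2
        refine ⟨?_, hω⟩
        funext x y z
        have hc : L2 ξ η F x y z = -F x y z := by
          have := congrFun (congrFun (congrFun hL2 x) y) z
          simpa using this
        have he := L2_eq_hF hacm hInF hω x y z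
        show hF φ F x y z = (0 : ℝ)
        linarith
      · rintro ⟨hhF, -⟩
        funext x y z
        have h0 : hF φ F x y z = 0 := by rw [hhF]; rfl
        have he := L2_eq_hF hacm hInF hω x y z
        show L2 ξ η F x y z = -F x y z
        linarith
    · constructor
      · intro hL2
        have key : ∀ x y z, η x * F ξ y z + (η y * F x ξ z - η z * F x ξ y) = 0 := by
          intro x y z
          have hc : L2 ξ η F x y z = F x y z := congrFun (congrFun (congrFun hL2 x) y) z
          rw [L2_apply] at hc
          linarith
        have hξ0 : ∀ y z, F ξ y z = 0 := by
          intro y z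
          have hk := key ξ y z
          rw [hηξ, hω z, hω y] at hk
          linarith
        constructor
        · funext x y z
          show η x * F ξ y z = (0 : ℝ)
          rw [hξ0]; ring
        · funext x y z
          show η y * F x ξ z - η z * F x ξ y = (0 : ℝ)
          have hk := key x y z
          rw [hξ0 y z] at hk
          linarith
      · rintro ⟨h1, h2⟩
        funext x y z
        have c1 : η x * F ξ y z = 0 := congrFun (congrFun (congrFun h1 x) y) z
        have c2 : η y * F x ξ z - η z * F x ξ y = 0 := congrFun (congrFun (congrFun h2 x) y) z
        show L2 ξ η F x y z = F x y z
        rw [L2_apply]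
        linarith
  -- Part 7
  have part7 : ∀ F, InF φ ξ η F → (∀ z, F ξ ξ z = 0) →
      ∃! p : (V → V → V → ℝ) × (V → V → V → ℝ),
        MemVF φ ξ η p.1 ∧ MemHF φ ξ η p.2 ∧ F = p.1 + p.2 := by
    intro F hInF hω
    set Fv : V → V → V → ℝ :=
      fun x y z => η x * F ξ y z + (η y * F x ξ z - η z * F x ξ y) with hFvdef
    set Fh : V → V → V → ℝ := fun x y z => F x y z - Fv x y z with hFhdef
    have hInFv : InF φ ξ η Fv := Fv_mem hacm hInF hω
    have hInFh : InF φ ξ η Fh := InF_sub hInF hInFv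
    have hA := hInF.2.1
    have hhFv : hF φ Fv = 0 := by
      funext x y z
      show η (hMap φ x) * F ξ (hMap φ y) (hMap φ z)
        + (η (hMap φ y) * F (hMap φ x) ξ (hMap φ z)
          - η (hMap φ z) * F (hMap φ x) ξ (hMap φ y)) = (0 : ℝ)
      rw [acm_eta_hMap hacm, acm_eta_hMap hacm, acm_eta_hMap hacm]; ring
    have hωFv : ∀ z, Fv ξ ξ z = 0 := by
      intro z
      show η ξ * F ξ ξ z + (η ξ * F ξ ξ z - η z * F ξ ξ ξ) = 0
      simp only [hω]; ring
    have hF1Fh : F1 ξ η Fh = 0 := by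
      funext x y z
      show η x * (F ξ y z - (η ξ * F ξ y z + (η y * F ξ ξ z - η z * F ξ ξ y))) = (0 : ℝ)
      simp only [hηξ, hω]; ring
    have hF2Fh : F2 ξ η Fh = 0 := by
      funext x y z
      show η y * (F x ξ z - (η x * F ξ ξ z + (η ξ * F x ξ z - η z * F x ξ ξ)))
        - η z * (F x ξ y - (η x * F ξ ξ y + (η ξ * F x ξ y - η y * F x ξ ξ))) = (0 : ℝ)
      simp only [hηξ, hω, fxi2 hA]; ring
    refine ⟨(Fv, Fh), ⟨⟨hInFv, hhFv, hωFv⟩, ⟨hInFh, hF1Fh, hF2Fh⟩, ?_⟩, ?_⟩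
    · funext x y z
      show F x y z = Fv x y z + (F x y z - Fv x y z)
      ring
    · rintro ⟨q1, q2⟩ ⟨hq1, hq2, hsum⟩
      have hωq1 : ∀ z, q1 ξ ξ z = 0 := hq1.2.2
      have hq2ξ : ∀ y z, q2 ξ y z = 0 := by
        intro y z
        have h' : η ξ * q2 ξ y z = 0 := congrFun (congrFun (congrFun hq2.2.1 ξ) y) z
        rw [hηξ] at h'; linarith
      have hq2m : ∀ x z, q2 x ξ z = 0 := by
        intro x z
        have h' : η ξ * q2 x ξ z - η z * q2 x ξ ξ = 0 :=
          congrFun (congrFun (congrFun hq2.2.2 x) ξ) z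
        have h0 : q2 x ξ ξ = 0 := fxi2 hq2.1.2.1 x
        rw [hηξ, h0] at h'
        linarith
      have hs : ∀ x y z, F x y z = q1 x y z + q2 x y z := by
        intro x y z
        have := congrFun (congrFun (congrFun hsum x) y) z
        simpa using this
      have e1 : q1 = Fv := by
        funext x y z
        have r1 : q1 ξ y z = F ξ y z := by
          have := hs ξ y z; rw [hq2ξ] at this; linarith
        have r2 : q1 x ξ z = F x ξ z := by
          have := hs x ξ z; rw [hq2m] at this; linarith
        have r3 : q1 x ξ y = F x ξ y := by
          have := hs x ξ y; rw [hq2m] at this; linarith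
        have hq10 : hF φ q1 x y z = 0 := congrFun (congrFun (congrFun hq1.2.1 x) y) z
        rw [hF_apply hacm hq1.1 hωq1] at hq10
        show q1 x y z = η x * F ξ y z + (η y * F x ξ z - η z * F x ξ y)
        rw [← r1, ← r2, ← r3]
        linarith
      have e2 : q2 = Fh := by
        funext x y z
        have hq1v : q1 x y z = Fv x y z := by rw [e1]
        have := hs x y z
        show q2 x y z = F x y z - Fv x y z
        linarith
      rw [e1, e2]
  -- Part 8
  have part8 : ∀ F G, MemVF φ ξ η F → MemHF φ ξ η G → innerF e F G = 0 := by
    intro F G hFv hGh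
    have hωG : ∀ z, G ξ ξ z = 0 := by
      intro z
      have h' : η ξ * G ξ ξ z = 0 := congrFun (congrFun (congrFun hGh.2.1 ξ) ξ) z
      rw [hηξ] at h'
      linarith
    have hL2F : L2 ξ η F = -F := ((part6 F hFv.1 hFv.2.2).1).mpr ⟨hFv.2.1, hFv.2.2⟩
    have hL2G : L2 ξ η G = G := ((part6 G hGh.1 hωG).2).mpr ⟨hGh.2.1, hGh.2.2⟩
    have hiso := part4 F G hFv.1 hFv.2.2 hGh.1 hωG
    rw [hL2F, hL2G] at hiso
    have hneg : innerF e (-F) G = -innerF e F G := by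
      simp only [innerF, Pi.neg_apply, neg_mul, ← Finset.sum_neg_distrib]
    rw [hneg] at hiso
    linarith
  exact ⟨part1, part2, part3, part4, part5, part6, part7, part8⟩
end
end

section
/- The map L₄ defined on (v𝔽)′ = {F ∈ 𝔽 : hF = 0 and F(ξ,y,z) = 0 for all y,z} by L₄(F) = −F₄(F) is an involutive linear isometry of (v𝔽)′ commuting with the action on 𝔽 of every linear isometry A of V with A∘φ = φ∘A and Aξ = ξ, and it yields the orthogonal decomposition (v𝔽)′ = 𝒩 ⊕ 𝒩̃, where 𝒩 = {F ∈ (v𝔽)′ : F = F₄(F)} is the (−1)-eigenspace and 𝒩̃ = {F ∈ (v𝔽)′ : F = −F₄(F)} is the (+1)-eigenspace; the components of F ∈ (v𝔽)′ in 𝒩 and 𝒩̃ are (1/2){F₂(F) + F₄(F)} and (1/2){F₂(F) − F₄(F)} respectively. -/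
open scoped BigOperators RealInnerProductSpace

noncomputable section

variable {V : Type*} [NormedAddCommGroup V] [InnerProductSpace ℝ V]

/-! On `(v𝔽)′` the conditions `hF = 0` and `F(ξ,·,·) = 0` force `F = F₂(F)`, so `F` is determined
by the bilinear form `B(x,z) = F(x,ξ,z)`, which vanishes as soon as one argument is `ξ`, and
`⟨F,G⟩ = 2 ⟨B_F, B_G⟩`. In these terms `F₄` is `B ↦ B(φ·,φ·)`; since `φ` is an isometry of `ξ^⊥`
with `φ² = -1` there, `F₄` is an involutive isometry of `(v𝔽)′` commuting with every `A` that
preserves the structure. The rest is the linear algebra of an isometric involution: its two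
eigenspaces are orthogonal and `F = ½(F + F₄F) + ½(F − F₄F)`. -/

section AlmostContact

variable {n : ℕ} {φ : V →ₗ[ℝ] V} {ξ : V} {η : V →ₗ[ℝ] ℝ} {F G : V → V → V → ℝ}

theorem OrthonormalBasis.inner_sum_apply_smul {ι : Type*} [Fintype ι]
    (e : OrthonormalBasis ι ℝ V) {f : V → ℝ} (hf : IsLinearMap ℝ f) (x : V) :
    ⟪∑ i, f (e i) • e i, x⟫ = f x := by
  obtain ⟨ℓ, rfl⟩ : ∃ ℓ : V →ₗ[ℝ] ℝ, f = ℓ := ⟨hf.mk' f, rfl⟩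
  conv_rhs => rw [← e.sum_repr x]
  simp only [map_sum, map_smul, sum_inner, real_inner_smul_left, e.repr_apply_apply,
    smul_eq_mul, mul_comm]

namespace ACM

theorem eta_xi (h : ACM n φ ξ η) : η ξ = 1 := by
  obtain ⟨-, hφφ, hφξ, -, hξξ, -⟩ := h
  have hξ : ξ ≠ 0 := by rintro rfl; simp at hξξ
  have : (η ξ - 1) • ξ = 0 := by
    have := hφφ ξ
    rw [hφξ, map_zero] at this
    rw [sub_smul, one_smul]; linear_combination (norm := module) -this
  simpa [sub_eq_zero, hξ] using this

theorem eta_eq_inner (h : ACM n φ ξ η) (x : V) : η x = ⟪x, ξ⟫ := by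
  have := h.2.2.2.2.2 x ξ
  rw [h.2.2.1, inner_zero_right, h.eta_xi, mul_one] at this
  linarith

theorem inner_phi_left (h : ACM n φ ξ η) (x y : V) : ⟪φ x, y⟫ = -⟪x, φ y⟫ := by
  have := h.2.2.2.2.2 x (φ y)
  rw [h.2.2.2.1 y, mul_zero, sub_zero, h.2.1 y, inner_add_right, inner_neg_right,
    real_inner_smul_right, ← h.eta_eq_inner, h.2.2.2.1, mul_zero, add_zero] at this
  linarith

theorem hMap_eq (h : ACM n φ ξ η) (x : V) : hMap φ x = x - η x • ξ := by
  rw [hMap, h.2.1 x]; abel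

theorem eta_hMap (h : ACM n φ ξ η) (x : V) : η (hMap φ x) = 0 := by
  simp [h.hMap_eq, h.eta_xi]

theorem sum_apply_mul_eta (h : ACM n φ ξ η) {ι : Type*} [Fintype ι]
    (e : OrthonormalBasis ι ℝ V) {f : V → ℝ} (hf : IsLinearMap ℝ f) :
    ∑ i, f (e i) * η (e i) = f ξ := by
  simp_rw [h.eta_eq_inner, ← real_inner_smul_left, ← sum_inner, e.inner_sum_apply_smul hf]

theorem sum_inner_phi_mul_inner_phi (h : ACM n φ ξ η) {ι : Type*} [Fintype ι]
    (e : OrthonormalBasis ι ℝ V) (u v : V) :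
    ∑ i, ⟪u, φ (e i)⟫ * ⟪v, φ (e i)⟫ = ⟪u, v⟫ - η u * η v := by
  rw [← h.2.2.2.2.2, ← e.sum_inner_mul_inner]
  refine Finset.sum_congr rfl fun i _ => ?_
  rw [h.inner_phi_left, real_inner_comm (φ v) (e i), h.inner_phi_left]
  ring

theorem sum_apply_phi_mul_apply_phi (h : ACM n φ ξ η) {ι : Type*} [Fintype ι]
    (e : OrthonormalBasis ι ℝ V) {f g : V → ℝ} (hf : IsLinearMap ℝ f) (hg : IsLinearMap ℝ g)
    (hfξ : f ξ = 0) (hgξ : g ξ = 0) :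
    ∑ i, f (φ (e i)) * g (φ (e i)) = ∑ i, f (e i) * g (e i) := by
  set u := ∑ i, f (e i) • e i
  set v := ∑ i, g (e i) • e i
  have hu : ∀ x, ⟪u, x⟫ = f x := e.inner_sum_apply_smul hf
  have hv : ∀ x, ⟪v, x⟫ = g x := e.inner_sum_apply_smul hg
  calc ∑ i, f (φ (e i)) * g (φ (e i)) = ⟪u, v⟫ - η u * η v := by
        simp_rw [← hu, ← hv, h.sum_inner_phi_mul_inner_phi]
    _ = ∑ i, f (e i) * g (e i) := by
        rw [h.eta_eq_inner, h.eta_eq_inner, hu ξ, hv ξ, hfξ, hgξ, mul_zero, sub_zero,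
          ← e.sum_inner_mul_inner]
        exact Finset.sum_congr rfl fun i _ => by rw [hu, real_inner_comm, hv]

end ACM

theorem Trilinear.add (hF : Trilinear F) (hG : Trilinear G) : Trilinear (F + G) :=
  ⟨fun y z => (IsLinearMap.mk' _ (hF.1 y z) + IsLinearMap.mk' _ (hG.1 y z)).isLinear,
    fun x z => (IsLinearMap.mk' _ (hF.2.1 x z) + IsLinearMap.mk' _ (hG.2.1 x z)).isLinear,
    fun x y => (IsLinearMap.mk' _ (hF.2.2 x y) + IsLinearMap.mk' _ (hG.2.2 x y)).isLinear⟩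

theorem Trilinear.smul (c : ℝ) (hF : Trilinear F) : Trilinear (c • F) :=
  ⟨fun y z => (c • IsLinearMap.mk' _ (hF.1 y z)).isLinear,
    fun x z => (c • IsLinearMap.mk' _ (hF.2.1 x z)).isLinear,
    fun x y => (c • IsLinearMap.mk' _ (hF.2.2 x y)).isLinear⟩

theorem InF.apply_self (hF : InF φ ξ η F) (x y : V) : F x y y = 0 := by
  linarith [hF.2.1 x y y]

variable (φ ξ η) in
def vFPrime : Submodule ℝ (V → V → V → ℝ) where
  carrier := {F | MemVF' φ ξ η F}
  zero_mem' := ⟨⟨⟨fun _ _ => (0 : V →ₗ[ℝ] ℝ).isLinear, fun _ _ => (0 : V →ₗ[ℝ] ℝ).isLinear,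
    fun _ _ => (0 : V →ₗ[ℝ] ℝ).isLinear⟩, by simp, by simp⟩, rfl, by simp⟩
  add_mem' := by
    rintro F G ⟨⟨hFt, hFa, hFφ⟩, hFh, hFξ⟩ ⟨⟨hGt, hGa, hGφ⟩, hGh, hGξ⟩
    refine ⟨⟨hFt.add hGt, fun x y z => ?_, fun x y z => ?_⟩, ?_, fun y z => ?_⟩
    · simp only [Pi.add_apply]; rw [hFa, hGa]; ring
    · simp only [Pi.add_apply]; rw [hFφ x y z, hGφ x y z]; ring
    · change hF φ F + hF φ G = 0; rw [hFh, hGh, add_zero]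
    · simp [hFξ, hGξ]
  smul_mem' := by
    rintro c F ⟨⟨hFt, hFa, hFφ⟩, hFh, hFξ⟩
    refine ⟨⟨hFt.smul c, fun x y z => ?_, fun x y z => ?_⟩, ?_, fun y z => ?_⟩
    · simp only [Pi.smul_apply, smul_eq_mul]; rw [hFa]; ring
    · simp only [Pi.smul_apply, smul_eq_mul]; rw [hFφ x y z]; ring
    · change c • hF φ F = 0; rw [hFh, smul_zero]
    · simp [hFξ]

theorem MemVF'.F2_eq (hF : MemVF' φ ξ η F) (h : ACM n φ ξ η) : F2 ξ η F = F := by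
  have hxξξ := hF.1.apply_self
  obtain ⟨⟨⟨h₁, h₂, h₃⟩, hanti, -⟩, hh, hξ⟩ := hF
  funext x y z
  have h0 := congrFun (congrFun (congrFun hh x) y) z
  simp only [_root_.hF, Pi.zero_apply, h.hMap_eq, (h₁ _ _).map_sub, (h₁ _ _).map_smul,
    (h₂ _ _).map_sub, (h₂ _ _).map_smul, (h₃ _ _).map_sub, (h₃ _ _).map_smul, hξ,
    smul_eq_mul] at h0
  rw [hxξξ, hanti x y ξ] at h0
  rw [F2]
  linarith

variable (φ ξ η) in
def F4ₗ : (V → V → V → ℝ) →ₗ[ℝ] (V → V → V → ℝ) where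
  toFun := F4 φ ξ η
  map_add' F G := by funext x y z; simp only [F4, Pi.add_apply]; ring
  map_smul' c F := by
    funext x y z; simp only [F4, Pi.smul_apply, smul_eq_mul, RingHom.id_apply]; ring

@[simp]
theorem F4ₗ_apply : F4ₗ φ ξ η F = F4 φ ξ η F := rfl

theorem Trilinear.trilinear_F4 (hF : Trilinear F) : Trilinear (F4 φ ξ η F) := by
  obtain ⟨h₁, -, h₃⟩ := hF
  refine ⟨fun y z => ⟨fun a b => ?_, fun c a => ?_⟩, fun x z => ⟨fun a b => ?_, fun c a => ?_⟩,
    fun x y => ⟨fun a b => ?_, fun c a => ?_⟩⟩ <;>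
  simp only [_root_.F4, map_add, map_smul, (h₁ _ _).map_add, (h₁ _ _).map_smul,
    (h₃ _ _).map_add, (h₃ _ _).map_smul, smul_eq_mul] <;> ring

theorem ACM.F4_apply_xi (h : ACM n φ ξ η) (hF : Trilinear F) (x z : V) :
    F4 φ ξ η F x ξ z = F (φ x) ξ (φ z) := by
  simp only [F4, h.eta_xi, h.2.2.1, (hF.2.2 _ _).map_zero]; ring

theorem MemVF'.apply_phi_phi_xi (hF : MemVF' φ ξ η F) (h : ACM n φ ξ η) (x z : V) :
    F (φ (φ x)) ξ (φ (φ z)) = F x ξ z := by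
  have hxξξ := hF.1.apply_self x ξ
  obtain ⟨⟨⟨h₁, -, h₃⟩, -, -⟩, -, hξ⟩ := hF
  simp only [h.2.1, (h₁ _ _).map_add, (h₁ _ _).map_neg, (h₁ _ _).map_smul,
    (h₃ _ _).map_add, (h₃ _ _).map_neg, (h₃ _ _).map_smul, hξ, hxξξ, smul_eq_mul]
  ring

theorem MemVF'.F4_F4 (hF : MemVF' φ ξ η F) (h : ACM n φ ξ η) : F4 φ ξ η (F4 φ ξ η F) = F := by
  conv_rhs => rw [← hF.F2_eq h]
  funext x y z
  change η y * F4 φ ξ η F (φ x) ξ (φ z) - η z * F4 φ ξ η F (φ x) ξ (φ y) = F2 ξ η F x y z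
  rw [h.F4_apply_xi hF.1.1, h.F4_apply_xi hF.1.1, hF.apply_phi_phi_xi h,
    hF.apply_phi_phi_xi h, F2]

theorem MemVF'.memVF'_F4 (hF : MemVF' φ ξ η F) (h : ACM n φ ξ η) :
    MemVF' φ ξ η (F4 φ ξ η F) := by
  have hzero : ∀ x y, F x y 0 = 0 := fun x y => (hF.1.1.2.2 x y).map_zero
  refine ⟨⟨hF.1.1.trilinear_F4, fun x y z => by simp only [_root_.F4]; ring, fun x y z => ?_⟩,
    ?_, ?_⟩
  · simp only [_root_.F4, h.2.2.2.1, h.eta_xi, h.2.2.1, hzero]; ring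
  · funext x y z
    simp [_root_.F4, _root_.hF, h.eta_hMap]
  · intro y z
    simp [_root_.F4, h.2.2.1, (hF.1.1.1 _ _).map_zero]

theorem ACM.F4_actA (h : ACM n φ ξ η) {A : V ≃ₗᵢ[ℝ] V} (hAφ : ∀ x, A (φ x) = φ (A x))
    (hAξ : A ξ = ξ) (F : V → V → V → ℝ) : F4 φ ξ η (actA A F) = actA A (F4 φ ξ η F) := by
  have hξ : A.symm ξ = ξ := A.symm_apply_eq.mpr hAξ.symm
  have hφ : ∀ x, A.symm (φ x) = φ (A.symm x) := fun x =>
    A.symm_apply_eq.mpr (by rw [hAφ, A.apply_symm_apply])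
  have hη : ∀ x, η (A.symm x) = η x := fun x => by
    rw [h.eta_eq_inner, h.eta_eq_inner, ← hξ, A.symm.inner_map_map, hξ]
  funext x y z
  simp only [F4, actA, hφ, hξ, hη]

theorem innerF_neg_left {ι : Type*} [Fintype ι] (e : OrthonormalBasis ι ℝ V)
    (F G : V → V → V → ℝ) :
    innerF e (-F) G = -innerF e F G := by
  simp [innerF]

theorem innerF_neg_right {ι : Type*} [Fintype ι] (e : OrthonormalBasis ι ℝ V)
    (F G : V → V → V → ℝ) :
    innerF e F (-G) = -innerF e F G := by
  simp [innerF]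

/-- A polarized form of Lagrange's identity. -/
theorem Finset.sum_sum_mul_sub_mul_mul_sub_mul {ι : Type*} [Fintype ι] (a b c : ι → ℝ) :
    ∑ j, ∑ k, (a j * b k - a k * b j) * (a j * c k - a k * c j) =
      2 * ((∑ j, a j * a j) * (∑ j, b j * c j) - (∑ j, b j * a j) * (∑ j, c j * a j)) := by
  have hterm : ∀ j k, (a j * b k - a k * b j) * (a j * c k - a k * c j) =
      a j * a j * (b k * c k) - b j * a j * (c k * a k) - c j * a j * (b k * a k) +
        b j * c j * (a k * a k) := fun j k => by ring
  simp only [hterm, Finset.sum_add_distrib, Finset.sum_sub_distrib, ← Finset.mul_sum,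
    ← Finset.sum_mul]
  ring

theorem MemVF'.innerF_eq (hF : MemVF' φ ξ η F) (hG : MemVF' φ ξ η G) (h : ACM n φ ξ η)
    {ι : Type*} [Fintype ι] (e : OrthonormalBasis ι ℝ V) :
    innerF e F G = 2 * ∑ i, ∑ k, F (e i) ξ (e k) * G (e i) ξ (e k) := by
  calc innerF e F G = innerF e (F2 ξ η F) (F2 ξ η G) := by rw [hF.F2_eq h, hG.F2_eq h]
    _ = _ := by
      rw [innerF, Finset.mul_sum]
      refine Finset.sum_congr rfl fun i _ => ?_
      simp only [F2]
      rw [Finset.sum_sum_mul_sub_mul_mul_sub_mul, h.sum_apply_mul_eta e η.isLinear, h.eta_xi,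
        h.sum_apply_mul_eta e (hF.1.1.2.2 _ _), h.sum_apply_mul_eta e (hG.1.1.2.2 _ _),
        hF.1.apply_self, hG.1.apply_self]
      ring

theorem MemVF'.innerF_F4_F4 (hF : MemVF' φ ξ η F) (hG : MemVF' φ ξ η G) (h : ACM n φ ξ η)
    {ι : Type*} [Fintype ι] (e : OrthonormalBasis ι ℝ V) :
    innerF e (F4 φ ξ η F) (F4 φ ξ η G) = innerF e F G := by
  rw [(hF.memVF'_F4 h).innerF_eq (hG.memVF'_F4 h) h, hF.innerF_eq hG h]
  simp only [h.F4_apply_xi hF.1.1, h.F4_apply_xi hG.1.1]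
  congr 1
  calc ∑ i, ∑ k, F (φ (e i)) ξ (φ (e k)) * G (φ (e i)) ξ (φ (e k))
        = ∑ i, ∑ k, F (φ (e i)) ξ (e k) * G (φ (e i)) ξ (e k) :=
          Finset.sum_congr rfl fun i _ => h.sum_apply_phi_mul_apply_phi e
            (hF.1.1.2.2 _ _) (hG.1.1.2.2 _ _) (hF.1.apply_self _ _) (hG.1.apply_self _ _)
    _ = ∑ k, ∑ i, F (φ (e i)) ξ (e k) * G (φ (e i)) ξ (e k) := Finset.sum_comm
    _ = ∑ k, ∑ i, F (e i) ξ (e k) * G (e i) ξ (e k) :=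
          Finset.sum_congr rfl fun k _ => h.sum_apply_phi_mul_apply_phi e
            (hF.1.1.1 _ _) (hG.1.1.1 _ _) (hF.2.2 _ _) (hG.2.2 _ _)
    _ = _ := Finset.sum_comm

theorem MemVF'.memN_half_add_F4 (hF : MemVF' φ ξ η F) (h : ACM n φ ξ η) :
    MemN φ ξ η ((1 / 2 : ℝ) • (F + F4 φ ξ η F)) := by
  refine ⟨(vFPrime φ ξ η).smul_mem _ ((vFPrime φ ξ η).add_mem hF (hF.memVF'_F4 h)), ?_⟩
  change _ = F4ₗ φ ξ η _
  rw [map_smul, map_add, F4ₗ_apply, F4ₗ_apply, hF.F4_F4 h, add_comm]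

theorem MemVF'.memNt_half_sub_F4 (hF : MemVF' φ ξ η F) (h : ACM n φ ξ η) :
    MemNt φ ξ η ((1 / 2 : ℝ) • (F - F4 φ ξ η F)) := by
  refine ⟨(vFPrime φ ξ η).smul_mem _ ((vFPrime φ ξ η).sub_mem hF (hF.memVF'_F4 h)), ?_⟩
  change _ = -F4ₗ φ ξ η _
  rw [map_smul, map_sub, F4ₗ_apply, F4ₗ_apply, hF.F4_F4 h]
  module

theorem eq_half_add_F4_of_eigen {p q : V → V → V → ℝ} (hp : p = F4 φ ξ η p)
    (hq : q = -F4 φ ξ η q) :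
    p = (1 / 2 : ℝ) • (p + q + F4 φ ξ η (p + q)) ∧
      q = (1 / 2 : ℝ) • (p + q - F4 φ ξ η (p + q)) := by
  rw [← F4ₗ_apply, map_add, F4ₗ_apply, F4ₗ_apply, ← hp, neg_eq_iff_eq_neg.mp hq.symm]
  constructor <;> module

theorem MemVF'.existsUnique_add_memN_memNt (hF : MemVF' φ ξ η F) (h : ACM n φ ξ η) :
    ∃! p : (V → V → V → ℝ) × (V → V → V → ℝ),
      MemN φ ξ η p.1 ∧ MemNt φ ξ η p.2 ∧ F = p.1 + p.2 := by
  refine ⟨((1 / 2 : ℝ) • (F + F4 φ ξ η F), (1 / 2 : ℝ) • (F - F4 φ ξ η F)),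
    ⟨hF.memN_half_add_F4 h, hF.memNt_half_sub_F4 h, by module⟩, ?_⟩
  rintro ⟨p, q⟩ ⟨hp, hq, rfl⟩
  obtain ⟨hp', hq'⟩ := eq_half_add_F4_of_eigen hp.2 hq.2
  exact Prod.ext hp' hq'

theorem MemN.innerF_eq_zero (hF : MemN φ ξ η F) (hG : MemNt φ ξ η G) (h : ACM n φ ξ η)
    {ι : Type*} [Fintype ι] (e : OrthonormalBasis ι ℝ V) : innerF e F G = 0 := by
  have := hF.1.innerF_F4_F4 hG.1 h e
  rw [← hF.2, neg_eq_iff_eq_neg.mp hG.2.symm, innerF_neg_right] at this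
  linarith

theorem L4_eq_neg_F4 : L4 φ ξ η F = -F4 φ ξ η F := rfl

end AlmostContact

theorem stmt12 (n : ℕ) (φ : V →ₗ[ℝ] V) (ξ : V) (η : V →ₗ[ℝ] ℝ)
    (hacm : ACM n φ ξ η) (e : OrthonormalBasis (Fin (2 * n + 1)) ℝ V) :
    (∀ F, MemVF' φ ξ η F → MemVF' φ ξ η (L4 φ ξ η F)) ∧
    (∀ (a : ℝ) (F G : V → V → V → ℝ),
      L4 φ ξ η (fun x y z => a * F x y z + G x y z) =
        fun x y z => a * L4 φ ξ η F x y z + L4 φ ξ η G x y z) ∧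
    (∀ F, MemVF' φ ξ η F → L4 φ ξ η (L4 φ ξ η F) = F) ∧
    (∀ F G, MemVF' φ ξ η F → MemVF' φ ξ η G →
      innerF e (L4 φ ξ η F) (L4 φ ξ η G) = innerF e F G) ∧
    (∀ A : V ≃ₗᵢ[ℝ] V, (∀ x, A (φ x) = φ (A x)) → A ξ = ξ →
      ∀ F, MemVF' φ ξ η F → L4 φ ξ η (actA A F) = actA A (L4 φ ξ η F)) ∧
    (∀ F, MemVF' φ ξ η F →
      (L4 φ ξ η F = -F ↔ F = F4 φ ξ η F) ∧
      (L4 φ ξ η F = F ↔ F = -F4 φ ξ η F)) ∧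
    (∀ F, MemVF' φ ξ η F →
      MemN φ ξ η (fun x y z => (1 / 2) * (F2 ξ η F x y z + F4 φ ξ η F x y z)) ∧
      MemNt φ ξ η (fun x y z => (1 / 2) * (F2 ξ η F x y z - F4 φ ξ η F x y z)) ∧
      ∀ x y z, F x y z = (1 / 2) * (F2 ξ η F x y z + F4 φ ξ η F x y z) +
        (1 / 2) * (F2 ξ η F x y z - F4 φ ξ η F x y z)) ∧
    (∀ F, MemVF' φ ξ η F →
      ∃! p : (V → V → V → ℝ) × (V → V → V → ℝ),
        MemN φ ξ η p.1 ∧ MemNt φ ξ η p.2 ∧ F = p.1 + p.2) ∧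
    (∀ F G, MemN φ ξ η F → MemNt φ ξ η G → innerF e F G = 0) := by
  refine ⟨fun F hF => (vFPrime φ ξ η).neg_mem (hF.memVF'_F4 hacm), fun a F G => ?_,
    fun F hF => ?_, fun F G hF hG => ?_, fun A hAφ hAξ F _ => ?_, fun F _ => ⟨?_, ?_⟩,
    fun F hF => ?_, fun F hF => hF.existsUnique_add_memN_memNt hacm,
    fun F G hF hG => hF.innerF_eq_zero hG hacm e⟩
  · funext x y z; simp only [L4, F4]; ring
  · rw [L4_eq_neg_F4, L4_eq_neg_F4, ← F4ₗ_apply, map_neg, F4ₗ_apply, hF.F4_F4 hacm, neg_neg]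
  · rw [L4_eq_neg_F4, L4_eq_neg_F4, innerF_neg_left, innerF_neg_right, neg_neg,
      hF.innerF_F4_F4 hG hacm]
  · rw [L4_eq_neg_F4, L4_eq_neg_F4, hacm.F4_actA hAφ hAξ]; rfl
  · rw [L4_eq_neg_F4, neg_inj, eq_comm]
  · rw [L4_eq_neg_F4, eq_comm]
  · have hF2 := hF.F2_eq hacm
    refine ⟨?_, ?_, fun x y z => by rw [hF2]; ring⟩
    · convert hF.memN_half_add_F4 hacm using 1
      rw [hF2]; rfl
    · convert hF.memNt_half_sub_F4 hacm using 1
      rw [hF2]; rfl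
end
end
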